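/- arXiv:1804.00976 — 3 statements merged into one kernel-verified Lean document; each statement's English description precedes it below -/
import Mathlib

section
/- Let G = (V, E, w) be a weighted directed graph with complex-valued (constant) edge weights, and let S ⊊ S' ⊊ V with S a structural set of G. Then S is also a structural set of the isospectral reduction R_{S'}(G) of G onto S'. -/
/-- A cycle of the edge relation `E` based at `v`, with remaining vertices `l`:
the vertices `v :: l` are distinct and consecutive vertices (cyclically) are joined by
edges.  The cycle is a loop exactly when `l = []`. -/
def IsCycleFrom {V : Type*} (E : V → V → Prop) (v : V) (l : List V) : Prop :=
  List.Chain E v (l ++ [v]) ∧ (v :: l).Nodup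

/-- `S` is a structural set for the weighted directed graph with weights
`w : V → V → RatFunc ℂ` (edges are the pairs with nonzero weight): `S` is nonempty, every
cycle that is not a loop contains a vertex of `S`, and `w i i ≠ λ` for every `i ∉ S`. -/
def IsStructuralSet {V : Type*} (w : V → V → RatFunc ℂ) (S : Set V) : Prop :=
  S.Nonempty ∧
  (∀ v l, IsCycleFrom (fun a b => w a b ≠ 0) v l → l ≠ [] → ∃ u ∈ v :: l, u ∈ S) ∧
  ∀ i, i ∉ S → w i i ≠ RatFunc.X

/-- The weight `w(β, λ)` of a branch `β = (i, l..., j)` with interior vertices `l`,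
for constant complex edge weights `w`:
`w(i₀,i₁) ∏_{l=1}^{p-1} w(i_l, i_{l+1})/(λ - w(i_l,i_l))`. -/
noncomputable def branchWeight {V : Type*} (w : V → V → ℂ) : V → List V → V → RatFunc ℂ
  | i, [], j => RatFunc.C (w i j)
  | i, a :: t, j =>
      RatFunc.C (w i a) * branchWeight w a t j / (RatFunc.X - RatFunc.C (w a a))

/-- `(i, l..., j)` is a branch of `(G, S')`: consecutive vertices are joined by edges of `G`,
and the interior vertices `l` are distinct and lie outside `S'`. -/
def IsBranchInterior {V : Type*} {W : Type*} [Zero W] (w : V → V → W) (S' : Set V)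
    (i : V) (l : List V) (j : V) : Prop :=
  List.Chain (fun a b => w a b ≠ 0) i (l ++ [j]) ∧ l.Nodup ∧ ∀ v ∈ l, v ∉ S'

open Classical in
/-- The entry `R_{i,j}(G, S', λ)` of the isospectral reduction of the graph with constant
complex weights `w` onto `S'`: the sum of the weights of all branches from `i` to `j` with
interior vertices outside `S'`. -/
noncomputable def reducedWeight {V : Type*} [Fintype V] [DecidableEq V]
    (w : V → V → ℂ) (S' : Set V) (i j : V) : RatFunc ℂ :=
  ∑ l : {l : List V // l.Nodup},
    if IsBranchInterior w S' i l.1 j then branchWeight w i l.1 j else 0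

/-!
A non-loop cycle of `R_{S'}(G)` that avoids `S` lifts, edge by edge, to a closed walk of `G`:
each reduced edge comes from a branch whose interior lies outside `S' ⊇ S`, and whose vertices
are distinct because its endpoints are distinct vertices of `S'`. The lifted walk avoids `S` and
has distinct consecutive vertices, so it contains a cycle of `G` that is not a loop and misses
`S`, which is impossible.

For the diagonal condition, each branch weight is a constant times factors `1 / (λ - c)`, so it
has valuation at most `1` at infinity; hence so does every reduced weight, while `λ` has
valuation `exp 1`.
-/

namespace List

variable {α β : Type*}

theorem IsChain.and {R S : α → α → Prop} {l : List α} (hR : IsChain R l) (hS : IsChain S l) :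
    IsChain (fun a b => R a b ∧ S a b) l := by
  rw [isChain_iff_forall_rel_of_append_cons_cons] at *
  exact fun a b l₁ l₂ h => ⟨hR h, hS h⟩

theorem exists_isCycleFrom_of_not_nodup {E : α → α → Prop} :
    ∀ {L : List α}, IsChain (fun a b => E a b ∧ a ≠ b) L → ¬ L.Nodup →
      ∃ u l, IsCycleFrom E u l ∧ l ≠ [] ∧ u :: l ⊆ L
  | [], _, hL => absurd nodup_nil hL
  | x :: L, hchain, hdup => by
    by_cases hL : L.Nodup
    · obtain ⟨s, t, rfl⟩ := append_of_mem (by simpa [hL] using hdup : x ∈ L)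
      have hcyc := (isChain_cons_split.mp hchain).1
      have hxs : (x :: s).Nodup :=
        (nodup_middle.mp hL).sublist ((sublist_append_left s t).cons_cons x)
      refine ⟨x, s, ⟨hcyc.imp fun _ _ h => h.1, hxs⟩, ?_, by simp⟩
      rintro rfl
      exact (isChain_pair.mp hcyc).2 rfl
    · obtain ⟨u, l, hcyc, hl, hsub⟩ := exists_isCycleFrom_of_not_nodup hchain.tail hL
      exact ⟨u, l, hcyc, hl, fun y hy => mem_cons_of_mem x (hsub hy)⟩

theorem IsChain.exists_isChain_map_refine {f : β → α} {R : β → β → Prop} {T : α → α → Prop}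
    {P : α → Prop} (hR : ∀ a b, R a b → ∃ m, IsChain T (f a :: (m ++ [f b])) ∧ ∀ x ∈ m, P x) :
    ∀ {a c : β} {q : List β}, (∀ y ∈ q, P (f y)) → IsChain R (a :: (q ++ [c])) →
      ∃ M, IsChain T (f a :: (M ++ [f c])) ∧ ∀ x ∈ M, P x
  | a, c, [], _, h => hR a c (isChain_pair.mp h)
  | a, c, b :: q, hq, h => by
    rw [cons_append, isChain_cons_cons] at h
    obtain ⟨m, hm, hmP⟩ := hR a b h.1
    obtain ⟨M, hM, hMP⟩ :=
      exists_isChain_map_refine hR (fun y hy => hq y (mem_cons_of_mem b hy)) h.2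
    refine ⟨m ++ f b :: M, ?_, ?_⟩
    · rw [append_assoc, cons_append, isChain_cons_split]
      exact ⟨hm, hM⟩
    · simp only [mem_append, mem_cons]
      rintro x (hx | rfl | hx)
      exacts [hmP x hx, hq b mem_cons_self, hMP x hx]

end List

theorem IsCycleFrom.isChain_and_ne {α : Type*} {E : α → α → Prop} {v : α} {l : List α}
    (h : IsCycleFrom E v l) (hl : l ≠ []) :
    List.IsChain (fun a b => E a b ∧ a ≠ b) (v :: (l ++ [v])) := by
  refine List.IsChain.and h.1 ?_
  obtain ⟨l', z, rfl⟩ := (List.eq_nil_or_concat' l).resolve_left hl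
  have hnd := h.2
  rw [← List.cons_append, List.isChain_append]
  refine ⟨hnd.isChain, List.isChain_singleton v, ?_⟩
  simp only [List.nodup_cons, List.mem_append, List.mem_singleton, not_or] at hnd
  simpa [List.getLast?_cons, eq_comm] using hnd.1.2

namespace WithZero

theorem one_lt_exp_one : (1 : ℤᵐ⁰) < exp 1 := by
  rw [← exp_zero, exp_lt_exp]
  exact zero_lt_one

end WithZero

namespace RatFunc

open WithZero

variable {F : Type*} [Field F] [DecidableEq (RatFunc F)]

theorem inftyValuation_C_le_one (c : F) : inftyValuation F (C c) ≤ 1 := by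
  rcases eq_or_ne c 0 with rfl | hc
  · simp
  · rw [inftyValuation.C F hc]

theorem inftyValuation_X_sub_C (c : F) : inftyValuation F (X - C c) = exp 1 := by
  have hlt : inftyValuation F (C c) < inftyValuation F X := by
    rw [inftyValuation.X]
    exact (inftyValuation_C_le_one c).trans_lt one_lt_exp_one
  rw [Valuation.map_sub_eq_of_lt_left _ hlt, inftyValuation.X]

end RatFunc

section Reduction

open RatFunc WithZero

variable {V : Type*}

theorem IsBranchInterior.isChain_and_ne {W : Type*} [Zero W] {w : V → V → W} {S' : Set V}
    {i j : V} {l : List V} (h : IsBranchInterior w S' i l j) (hi : i ∈ S') (hj : j ∈ S')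
    (hij : i ≠ j) : List.IsChain (fun a b => w a b ≠ 0 ∧ a ≠ b) (i :: (l ++ [j])) := by
  obtain ⟨hchain, hnd, hout⟩ := h
  have hil : i ∉ l := fun hil => hout i hil hi
  have hlj : ∀ a ∈ l, a ≠ j := fun a ha haj => hout a ha (haj ▸ hj)
  have hnd' : (i :: (l ++ [j])).Nodup := by
    simpa [List.nodup_append, hnd, hil, hij] using hlj
  exact hchain.and hnd'.isChain

theorem exists_isBranchInterior_of_reducedWeight_ne_zero [Fintype V] [DecidableEq V]
    {w : V → V → ℂ} {S' : Set V} {i j : V} (h : reducedWeight w S' i j ≠ 0) :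
    ∃ l, IsBranchInterior w S' i l j := by
  obtain ⟨l, -, hl⟩ := Finset.exists_ne_zero_of_sum_ne_zero h
  exact ⟨l.1, by_contra fun hb => hl (if_neg hb)⟩

theorem exists_mem_of_isCycleFrom_reducedWeight [Fintype V] [DecidableEq V] {w : V → V → ℂ}
    {S S' : Set V} (hSS' : S ⊆ S')
    (hS : ∀ v l, IsCycleFrom (fun a b => w a b ≠ 0) v l → l ≠ [] → ∃ u ∈ v :: l, u ∈ S)
    {v : S'} {l : List S'} (hc : IsCycleFrom (fun a b : S' => reducedWeight w S' a b ≠ 0) v l)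
    (hl : l ≠ []) : ∃ u ∈ v :: l, u.1 ∈ S := by
  by_contra! hvl
  have hlift (a b : S') (hab : reducedWeight w S' a b ≠ 0 ∧ a ≠ b) :
      ∃ m, List.IsChain (fun x y => w x y ≠ 0 ∧ x ≠ y) (a.1 :: (m ++ [b.1])) ∧ ∀ x ∈ m, x ∉ S := by
    obtain ⟨m, hm⟩ := exists_isBranchInterior_of_reducedWeight_ne_zero hab.1
    exact ⟨m, hm.isChain_and_ne a.2 b.2 (Subtype.val_injective.ne hab.2),
      fun x hx hxS => hm.2.2 x hx (hSS' hxS)⟩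
  obtain ⟨M, hM, hMS⟩ := (hc.isChain_and_ne hl).exists_isChain_map_refine hlift
    fun y hy => hvl y (List.mem_cons_of_mem v hy)
  have hwalk : ∀ x ∈ v.1 :: (M ++ [v.1]), x ∉ S := by
    simp only [List.mem_cons, List.mem_append, List.not_mem_nil, or_false]
    rintro x (rfl | hx | rfl)
    exacts [hvl v List.mem_cons_self, hMS x hx, hvl v List.mem_cons_self]
  obtain ⟨u, l', hcyc, hl', hsub⟩ := List.exists_isCycleFrom_of_not_nodup hM (by simp)
  obtain ⟨x, hx, hxS⟩ := hS u l' hcyc hl'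
  exact hwalk x (hsub hx) hxS

theorem inftyValuation_branchWeight_le_one [DecidableEq (RatFunc ℂ)] (w : V → V → ℂ) :
    ∀ i l j, inftyValuation ℂ (branchWeight w i l j) ≤ 1
  | i, [], j => inftyValuation_C_le_one _
  | i, a :: t, j => by
    rw [branchWeight, map_div₀, map_mul, inftyValuation_X_sub_C]
    refine div_le_one_of_le₀ (le_trans ?_ one_lt_exp_one.le) zero_le
    exact mul_le_one' (inftyValuation_C_le_one _) (inftyValuation_branchWeight_le_one w a t j)

theorem inftyValuation_reducedWeight_le_one [DecidableEq (RatFunc ℂ)] [Fintype V] [DecidableEq V]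
    (w : V → V → ℂ) (S' : Set V) (i j : V) : inftyValuation ℂ (reducedWeight w S' i j) ≤ 1 := by
  refine Valuation.map_sum_le _ fun l _ => ?_
  split_ifs
  exacts [inftyValuation_branchWeight_le_one w i l.1 j, by simp]

theorem reducedWeight_ne_X [Fintype V] [DecidableEq V] (w : V → V → ℂ) (S' : Set V)
    (i j : V) : reducedWeight w S' i j ≠ RatFunc.X := by
  classical
  intro h
  have hle := inftyValuation_reducedWeight_le_one w S' i j
  rw [h, inftyValuation.X] at hle
  exact hle.not_gt one_lt_exp_one

end Reduction

theorem stmt4_general {V : Type*} [Fintype V] [DecidableEq V]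
    (w : V → V → ℂ) (S S' : Set V)
    (h1 : S ⊂ S')
    (hS : IsStructuralSet (fun i j => RatFunc.C (w i j)) S) :
    IsStructuralSet (fun i j : S' => reducedWeight w S' i.1 j.1) {v : S' | v.1 ∈ S} := by
  obtain ⟨⟨s, hs⟩, hcyc, -⟩ := hS
  simp only [map_ne_zero] at hcyc
  exact ⟨⟨⟨s, h1.subset hs⟩, hs⟩,
    fun v l hc hl => exists_mem_of_isCycleFrom_reducedWeight h1.subset hcyc hc hl,
    fun i _ => reducedWeight_ne_X w S' i i⟩

/-- for a weighted directed graph with constant complex edge weights and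
`S ⊊ S' ⊊ V` with `S` a structural set of `G`, the set `S` is also a structural set of the
isospectral reduction `R_{S'}(G)` of `G` onto `S'`. -/
theorem stmt4 {V : Type*} [Fintype V] [DecidableEq V]
    (w : V → V → ℂ) (S S' : Set V)
    (h1 : S ⊂ S') (h2 : S' ⊂ Set.univ)
    (hS : IsStructuralSet (fun i j => RatFunc.C (w i j)) S) :
    IsStructuralSet (fun i j : S' => reducedWeight w S' i.1 j.1) {v : S' | v.1 ∈ S} :=
  stmt4_general w S S' h1 hS
end

section
/- There exists an undirected graph on 11 vertices in which every vertex has degree 4 but the betweenness centrality is not constant across vertices; hence a graph can be an attractor for degree-based reduction while not being an attractor for centrality-based reduction. -/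
open Classical in
/-- `σ_{st}(v)`: the number of shortest paths from `s` to `t` that pass through `v`
(zero when `v ∈ {s,t}`). -/
noncomputable def sigmaThrough {V : Type*} (G : SimpleGraph V) (s t v : V) : ℕ :=
  if v = s ∨ v = t then 0
  else {p : G.Walk s t | p.IsPath ∧ p.length = G.dist s t ∧ v ∈ p.support}.ncard

/-- The betweenness centrality `g(v) = Σ_{s ≠ v} Σ_{t ≠ v, s} σ_{st}(v)`. -/
noncomputable def betweenness {V : Type*} [Fintype V] [DecidableEq V]
    (G : SimpleGraph V) (v : V) : ℕ :=
  ∑ s ∈ Finset.univ.filter (fun s => s ≠ v),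
    ∑ t ∈ Finset.univ.filter (fun t => t ≠ v ∧ t ≠ s),
      sigmaThrough G s t v

/-!
Take the disjoint union of `K₅` and the octahedron `K_{2,2,2}`: both are 4-regular, so every
vertex has degree 4. A vertex of `K₅` lies on no shortest path between two other vertices, since
any two vertices of its component are adjacent, so its betweenness is `0`. A vertex of the
octahedron is the midpoint of the shortest path between two of its non-adjacent neighbours, so
its betweenness is positive.
-/

namespace SimpleGraph

variable {V : Type*} {G : SimpleGraph V} {s t v : V}

theorem Walk.support_eq_of_length_eq_one {p : G.Walk s t} (hp : p.length = 1) :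
    p.support = [s, t] := by
  cases p with
  | nil => simp at hp
  | cons _ q =>
    cases q with
    | nil => rfl
    | cons _ r => simp at hp

theorem Reachable.iff_of_forall_adj {P : V → Prop} (hP : ∀ ⦃x y⦄, G.Adj x y → (P x ↔ P y))
    (h : G.Reachable s t) : P s ↔ P t := by
  rw [reachable_iff_reflTransGen] at h
  induction h with
  | refl => rfl
  | tail _ hxy ih => exact ih.trans (hP hxy)

end SimpleGraph

open SimpleGraph

section Betweenness

variable {V : Type*} {G : SimpleGraph V} {s t v : V}

theorem sigmaThrough_eq_zero_of_reachable_imp_adj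
    (h : G.Reachable s v → G.Reachable v t → G.Adj s t) : sigmaThrough G s t v = 0 := by
  classical
  unfold sigmaThrough
  split_ifs with hv
  · rfl
  convert Set.ncard_empty (G.Walk s t)
  refine Set.eq_empty_of_forall_notMem fun p ⟨_, hlen, hvp⟩ => hv ?_
  have hst : G.Adj s t :=
    h (p.takeUntil v hvp).reachable (p.dropUntil v hvp).reachable
  rw [p.support_eq_of_length_eq_one (hlen.trans (dist_eq_one_iff_adj.mpr hst))] at hvp
  simpa only [List.mem_cons, List.not_mem_nil, or_false] using hvp

theorem sigmaThrough_pos_of_adj_of_adj [G.LocallyFinite] (hsv : G.Adj s v) (hvt : G.Adj v t)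
    (hst : ¬G.Adj s t) (hne : s ≠ t) : 0 < sigmaThrough G s t v := by
  classical
  let p : G.Walk s t := .cons hsv (.cons hvt .nil)
  have hdist : G.dist s t = 2 := by
    have hlt : 1 < G.dist s t := p.reachable.one_lt_dist_of_ne_of_not_adj hne hst
    have hle : G.dist s t ≤ 2 := dist_le p
    omega
  have hp : p.length = G.dist s t := by simp [p, hdist]
  unfold sigmaThrough
  rw [if_neg (by rintro (h | h); exacts [hsv.ne h.symm, hvt.ne h])]
  refine (Set.ncard_pos ?_).mpr ⟨p, p.isPath_of_length_eq_dist hp, hp, by simp [p]⟩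
  exact (Set.toFinite {q : G.Walk s t | q.IsPath ∧ q.length = G.dist s t}).subset
    fun q hq => ⟨hq.1, hq.2.1⟩

variable [Fintype V] [DecidableEq V]

theorem betweenness_eq_zero_of_isClique (hv : G.IsClique (G.connectedComponentMk v).supp) :
    betweenness G v = 0 := by
  refine Finset.sum_eq_zero fun s _ => Finset.sum_eq_zero fun t ht => ?_
  refine sigmaThrough_eq_zero_of_reachable_imp_adj fun hsv hvt => ?_
  exact hv (ConnectedComponent.eq.mpr hsv) (ConnectedComponent.eq.mpr hvt.symm)
    (Finset.mem_filter.mp ht).2.2.symm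

theorem betweenness_pos_of_adj_of_adj [G.LocallyFinite] (hsv : G.Adj s v) (hvt : G.Adj v t)
    (hst : ¬G.Adj s t) (hne : s ≠ t) : 0 < betweenness G v := by
  refine Finset.sum_pos' (fun _ _ => Nat.zero_le _) ⟨s, by simp [hsv.ne], ?_⟩
  refine Finset.sum_pos' (fun _ _ => Nat.zero_le _) ⟨t, by simp [hvt.ne.symm, hne.symm], ?_⟩
  exact sigmaThrough_pos_of_adj_of_adj hsv hvt hst hne

end Betweenness

/-- Vertices `0, …, 4` span `K₅`; vertices `5, …, 10` span the octahedron, whose antipodal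
pairs are the residue classes `{5, 8}`, `{6, 9}`, `{7, 10}` mod 3. -/
def completeFiveSumOctahedron : SimpleGraph (Fin 11) where
  Adj i j := i ≠ j ∧ (i.val < 5 ↔ j.val < 5) ∧ (i.val < 5 ∨ i.val % 3 ≠ j.val % 3)
  symm := ⟨fun _ _ ⟨hne, hblock, _⟩ => ⟨hne.symm, hblock.symm, by omega⟩⟩
  loopless := ⟨fun _ ⟨hne, _⟩ => hne rfl⟩

instance : DecidableRel completeFiveSumOctahedron.Adj :=
  fun _ _ => by unfold completeFiveSumOctahedron; infer_instance

theorem completeFiveSumOctahedron_neighborSet_ncard (v : Fin 11) :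
    (completeFiveSumOctahedron.neighborSet v).ncard = 4 := by
  rw [Set.ncard_eq_toFinset_card']
  revert v
  decide

theorem completeFiveSumOctahedron_isClique_supp_zero :
    completeFiveSumOctahedron.IsClique (completeFiveSumOctahedron.connectedComponentMk 0).supp := by
  have hblock {i : Fin 11} (hi : i ∈ (completeFiveSumOctahedron.connectedComponentMk 0).supp) :
      i.val < 5 := by
    refine ((ConnectedComponent.eq.mp hi).iff_of_forall_adj (P := (·.val < 5)) ?_).mpr (by decide)
    exact fun _ _ h => h.2.1
  intro i hi j hj hij
  exact ⟨hij, by simp [hblock hi, hblock hj], .inl (hblock hi)⟩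

/-- there is an undirected graph on 11 vertices in which every vertex has
degree 4 but the betweenness centrality is not constant: a graph can be an attractor for
degree-based reduction while not being an attractor for centrality-based reduction. -/
theorem stmt7 :
    ∃ G : SimpleGraph (Fin 11),
      (∀ v, (G.neighborSet v).ncard = 4) ∧
      ∃ u v : Fin 11, betweenness G u ≠ betweenness G v := by
  refine ⟨completeFiveSumOctahedron, completeFiveSumOctahedron_neighborSet_ncard, 5, 0, ?_⟩
  have hzero := betweenness_eq_zero_of_isClique completeFiveSumOctahedron_isClique_supp_zero
  have hpos : 0 < betweenness completeFiveSumOctahedron 5 :=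
    betweenness_pos_of_adj_of_adj (s := 6) (t := 9) (by decide) (by decide) (by decide) (by decide)
  omega
end

section
/- If all edge weights of G = (V, E, w) are constant complex numbers and S ⊆ V is a structural set, then every entry R_{i,j}(G, S, λ) of the reduced adjacency matrix is a rational function of λ whose denominator divides ∏_{k ∈ V∖S}(λ − w(k,k)) and which is never identically equal to the function λ; in particular the diagonal entries of the reduction satisfy the structural-set condition w̃(i,i) ≠ λ. -/
/-!
A branch weight with interior vertices `l` is a fraction over `∏_{k ∈ l} (X - C (w k k))`
whose numerator has degree at most that of its denominator. The interior vertices of a branch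
are distinct and lie outside `S`, so all these denominators divide `Q = ∏_{k ∉ S} (X - C (w k k))`
and `R_{i,j} = P / Q` with `deg P ≤ deg Q`. This bounds the denominator and rules out
`R_{i,j} = X`, which would force `P = X * Q`.
-/

open Polynomial

section ProperFrac

variable {K : Type*} [Field K]

def IsProperFracOver (Q : K[X]) (f : RatFunc K) : Prop :=
  ∃ p : K[X], p.degree ≤ Q.degree ∧
    f = algebraMap K[X] (RatFunc K) p / algebraMap K[X] (RatFunc K) Q

namespace IsProperFracOver

variable {Q : K[X]} {f g : RatFunc K}

lemma zero (Q : K[X]) : IsProperFracOver Q 0 :=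
  ⟨0, by simp, by simp⟩

lemma add (hf : IsProperFracOver Q f) (hg : IsProperFracOver Q g) :
    IsProperFracOver Q (f + g) := by
  obtain ⟨p, hp, rfl⟩ := hf
  obtain ⟨q, hq, rfl⟩ := hg
  exact ⟨p + q, (degree_add_le p q).trans (max_le hp hq), by rw [map_add, add_div]⟩

lemma sum {ι : Type*} (s : Finset ι) {F : ι → RatFunc K}
    (hF : ∀ x ∈ s, IsProperFracOver Q (F x)) : IsProperFracOver Q (∑ x ∈ s, F x) :=
  Finset.sum_induction F _ (fun _ _ => add) (zero Q) hF

lemma C (c : K) : IsProperFracOver 1 (RatFunc.C c) :=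
  ⟨Polynomial.C c, by simpa using degree_C_le, by simp [RatFunc.algebraMap_C]⟩

lemma of_dvd {Q' : K[X]} (hf : IsProperFracOver Q f) (hQQ' : Q ∣ Q') (hQ' : Q' ≠ 0) :
    IsProperFracOver Q' f := by
  obtain ⟨p, hp, rfl⟩ := hf
  obtain ⟨e, rfl⟩ := hQQ'
  have he : algebraMap K[X] (RatFunc K) e ≠ 0 :=
    RatFunc.algebraMap_ne_zero (right_ne_zero_of_mul hQ')
  refine ⟨p * e, ?_, ?_⟩
  · rw [degree_mul, degree_mul]
    gcongr
  · rw [map_mul, map_mul, mul_div_mul_right _ _ he]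

lemma C_mul_div_X_sub_C (hf : IsProperFracOver Q f) (c a : K) :
    IsProperFracOver ((X - Polynomial.C a) * Q)
      (RatFunc.C c * f / (RatFunc.X - RatFunc.C a)) := by
  obtain ⟨p, hp, rfl⟩ := hf
  refine ⟨Polynomial.C c * p, ?_, ?_⟩
  · refine (degree_mul_le_of_le degree_C_le hp).trans ?_
    rw [zero_add, mul_comm]
    exact degree_le_mul_left Q (X_sub_C_ne_zero a)
  · rw [map_mul, map_mul, RatFunc.algebraMap_C, map_sub, RatFunc.algebraMap_X,
      RatFunc.algebraMap_C, mul_div_assoc, mul_div_assoc, div_div, mul_comm (algebraMap _ _ Q)]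

lemma denom_dvd (hf : IsProperFracOver Q f) (hQ : Q ≠ 0) : f.denom ∣ Q := by
  obtain ⟨p, -, hfp⟩ := hf
  exact (RatFunc.denom_dvd hQ).mpr ⟨p, hfp⟩

lemma ne_X (hf : IsProperFracOver Q f) (hQ : Q ≠ 0) : f ≠ RatFunc.X := by
  rintro rfl
  obtain ⟨p, hp, hXp⟩ := hf
  rw [← RatFunc.algebraMap_X, eq_div_iff (RatFunc.algebraMap_ne_zero hQ), ← map_mul] at hXp
  have hpXQ : p = X * Q := (RatFunc.algebraMap_injective K hXp).symm
  have := natDegree_le_natDegree hp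
  rw [hpXQ, natDegree_X_mul hQ] at this
  omega

end IsProperFracOver

end ProperFrac

section Branch

variable {V : Type*} (w : V → V → ℂ)

lemma branchWeight_isProperFracOver (l : List V) (i j : V) :
    IsProperFracOver (l.map fun a => X - Polynomial.C (w a a)).prod (branchWeight w i l j) := by
  induction l generalizing i with
  | nil => simpa [branchWeight] using IsProperFracOver.C (w i j)
  | cons a t ih => simpa [branchWeight] using (ih a).C_mul_div_X_sub_C (w i a) (w a a)

lemma branchWeight_isProperFracOver_prod {s : Finset V} {l : List V} (hl : l.Nodup)
    (hls : ∀ v ∈ l, v ∈ s) (i j : V) :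
    IsProperFracOver (∏ k ∈ s, (X - Polynomial.C (w k k))) (branchWeight w i l j) := by
  refine (branchWeight_isProperFracOver w l i j).of_dvd ?_
    (Finset.prod_ne_zero_iff.mpr fun k _ => X_sub_C_ne_zero _)
  classical
  rw [← List.prod_toFinset _ hl]
  exact Finset.prod_dvd_prod_of_subset _ _ _ fun v hv => hls v (List.mem_toFinset.mp hv)

lemma reducedWeight_isProperFracOver_prod [Fintype V] [DecidableEq V] (S : Set V)
    {s : Finset V} (hs : ∀ k ∉ S, k ∈ s) (i j : V) :
    IsProperFracOver (∏ k ∈ s, (X - Polynomial.C (w k k))) (reducedWeight w S i j) := by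
  refine IsProperFracOver.sum _ fun l _ => ?_
  split
  case isTrue hbranch =>
    exact branchWeight_isProperFracOver_prod w hbranch.2.1
      (fun v hv => hs v (hbranch.2.2 v hv)) i j
  case isFalse => exact IsProperFracOver.zero _

end Branch

open Classical in
theorem stmt16_general {V : Type*} [Fintype V] [DecidableEq V]
    (w : V → V → ℂ) (S : Set V) :
    ∀ i j : V,
      (reducedWeight w S i j).denom ∣
        ∏ k ∈ Finset.univ.filter (fun k => k ∉ S), (Polynomial.X - Polynomial.C (w k k)) ∧
      reducedWeight w S i j ≠ RatFunc.X := by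
  intro i j
  have hQ : ∏ k ∈ Finset.univ.filter (fun k => k ∉ S), (X - Polynomial.C (w k k)) ≠ 0 :=
    Finset.prod_ne_zero_iff.mpr fun k _ => X_sub_C_ne_zero _
  have hR := reducedWeight_isProperFracOver_prod w S (s := Finset.univ.filter (fun k => k ∉ S))
    (fun k hk => by simpa using hk) i j
  exact ⟨hR.denom_dvd hQ, hR.ne_X hQ⟩

open Classical in
/-- if all edge weights of `G` are constant complex numbers and `S` is a
structural set, then every entry `R_{i,j}(G,S,λ)` of the reduced adjacency matrix is a
rational function whose denominator divides `∏_{k ∉ S} (λ - w(k,k))` and which is never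
identically equal to the function `λ`; in particular the diagonal entries of the reduction
satisfy the structural-set condition `w̃(i,i) ≠ λ`. -/
theorem stmt16 {V : Type*} [Fintype V] [DecidableEq V]
    (w : V → V → ℂ) (S : Set V)
    (hS : IsStructuralSet (fun i j => RatFunc.C (w i j)) S) :
    ∀ i j : V,
      (reducedWeight w S i j).denom ∣
        ∏ k ∈ Finset.univ.filter (fun k => k ∉ S), (Polynomial.X - Polynomial.C (w k k)) ∧
      reducedWeight w S i j ≠ RatFunc.X :=
  stmt16_general w S
end
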